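/- arXiv:2510.06960 — 3 statements merged into one kernel-verified Lean document; each statement's English description precedes it below -/
import Mathlib

section
/- Let G = (V, E) be a finite graph. Suppose A is a symmetric matrix of the form A = ∑_{i=1}^n α_i f_i ⊗ f_i with α_i > 0, f_i : V → ℝ nonnegative, ‖f_i‖ = 1, and suppose tr A = 1 and A(x,y) = 0 for all {x,y} ∈ E. Then ⟨J, A⟩ ≤ α(G), where J is the all-ones matrix. In particular, the completely positive relaxation ϑ(G, C(V)) equals α(G). -/
open scoped Classical
open Finset Matrix

def IsIndep {V : Type*} (G : SimpleGraph V) (I : Finset V) : Prop :=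
  ∀ x ∈ I, ∀ y ∈ I, ¬ G.Adj x y

noncomputable def indepNum {V : Type*} [Fintype V] (G : SimpleGraph V) : ℕ :=
  Finset.univ.sup fun I : Finset V => if IsIndep G I then I.card else 0

/-- Membership in the cone of completely positive matrices. -/
def IsCP {V : Type*} [Fintype V] (A : Matrix V V ℝ) : Prop :=
  ∃ (n : ℕ) (c : Fin n → ℝ) (f : Fin n → V → ℝ),
    (∀ i, 0 ≤ c i) ∧ (∀ i x, 0 ≤ f i x) ∧
      A = ∑ i, c i • Matrix.of (fun x y => f i x * f i y)

/-- The completely positive relaxation `ϑ(G, C(V))`. -/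
noncomputable def thetaCP {V : Type*} [Fintype V] (G : SimpleGraph V) : ℝ :=
  sSup {r : ℝ | ∃ A : Matrix V V ℝ, IsCP A ∧ A.trace = 1 ∧
    (∀ x y, G.Adj x y → A x y = 0) ∧ r = ∑ x, ∑ y, A x y}

lemma indep_card_le {V : Type*} [Fintype V] (G : SimpleGraph V) (I : Finset V)
    (hI : IsIndep G I) : I.card ≤ indepNum G := by
  have := Finset.le_sup (f := fun I : Finset V => if IsIndep G I then I.card else 0)
    (Finset.mem_univ I)
  simp only [if_pos hI] at this; exact this

lemma entry_eq {V : Type*} [Fintype V] (n : ℕ) (c : Fin n → ℝ) (f : Fin n → V → ℝ)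
    (A : Matrix V V ℝ)
    (hA : A = ∑ i, c i • Matrix.of (fun x y => f i x * f i y)) (x y : V) :
    A x y = ∑ i, c i * (f i x * f i y) := by
  subst hA
  simp [Matrix.sum_apply]

lemma key {V : Type*} [Fintype V] (G : SimpleGraph V)
    (n : ℕ) (c : Fin n → ℝ) (f : Fin n → V → ℝ)
    (hc : ∀ i, 0 ≤ c i) (hf : ∀ i x, 0 ≤ f i x)
    (A : Matrix V V ℝ)
    (hA : A = ∑ i, c i • Matrix.of (fun x y => f i x * f i y))
    (htr : A.trace = 1)
    (hedge : ∀ x y, G.Adj x y → A x y = 0) :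
    (∑ x, ∑ y, A x y) ≤ (indepNum G : ℝ) := by
  set N : ℝ := (indepNum G : ℝ) with hN
  have hN0 : 0 ≤ N := Nat.cast_nonneg _
  have hentry := entry_eq n c f A hA
  -- trace
  have htr' : ∑ i, c i * ∑ x, f i x ^ 2 = 1 := by
    rw [← htr]
    have h1 : A.trace = ∑ x, ∑ i, c i * f i x ^ 2 := by
      rw [Matrix.trace]
      refine Finset.sum_congr rfl fun x _ => ?_
      rw [Matrix.diag_apply, hentry x x]
      exact Finset.sum_congr rfl fun i _ => by ring
    rw [h1, Finset.sum_comm]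
    exact Finset.sum_congr rfl fun i _ => by rw [Finset.mul_sum]
  -- key per-index bound
  have hkey : ∀ i, c i * (∑ x, f i x) ^ 2 ≤ (c i * ∑ x, f i x ^ 2) * N := by
    intro i
    rcases eq_or_lt_of_le (hc i) with h0 | hpos
    · simp [← h0]
    set I : Finset V := Finset.univ.filter (fun x => f i x ≠ 0) with hI
    have hindep : IsIndep G I := by
      intro x hx y hy hadj
      have hAxy := hedge x y hadj
      rw [hentry x y] at hAxy
      have := (Finset.sum_eq_zero_iff_of_nonneg (fun j _ =>
        mul_nonneg (hc j) (mul_nonneg (hf j x) (hf j y)))).1 hAxy i (Finset.mem_univ i)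
      have hx' : f i x ≠ 0 := (Finset.mem_filter.1 hx).2
      have hy' : f i y ≠ 0 := (Finset.mem_filter.1 hy).2
      exact hx' (by
        rcases mul_eq_zero.1 ((mul_eq_zero.1 this).resolve_left (ne_of_gt hpos)) with h | h
        · exact h
        · exact absurd h hy')
    have hcard : (I.card : ℝ) ≤ N := by
      rw [hN]; exact_mod_cast indep_card_le G I hindep
    have hsupp : ∑ x, f i x = ∑ x ∈ I, f i x := by
      rw [hI]
      exact (Finset.sum_filter_ne_zero _).symm
    have hCS : (∑ x ∈ I, f i x) ^ 2 ≤ (∑ x ∈ I, f i x ^ 2) * I.card := by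
      have := sum_mul_sq_le_sq_mul_sq I (fun x => f i x) (fun _ => 1)
      simpa using this
    have hsq : (∑ x ∈ I, f i x ^ 2) ≤ ∑ x, f i x ^ 2 :=
      Finset.sum_le_sum_of_subset_of_nonneg (Finset.filter_subset _ _)
        (fun x _ _ => sq_nonneg _)
    have h1 : (∑ x, f i x) ^ 2 ≤ (∑ x, f i x ^ 2) * N := by
      rw [hsupp]
      calc (∑ x ∈ I, f i x) ^ 2 ≤ (∑ x ∈ I, f i x ^ 2) * I.card := hCS
        _ ≤ (∑ x, f i x ^ 2) * N := by
            apply mul_le_mul hsq hcard (Nat.cast_nonneg _)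
            exact Finset.sum_nonneg fun x _ => sq_nonneg _
    calc c i * (∑ x, f i x) ^ 2 ≤ c i * ((∑ x, f i x ^ 2) * N) :=
          mul_le_mul_of_nonneg_left h1 (hc i)
      _ = (c i * ∑ x, f i x ^ 2) * N := by ring
  -- total sum
  have hsum : ∑ x, ∑ y, A x y = ∑ i, c i * (∑ x, f i x) ^ 2 := by
    simp_rw [hentry]
    rw [show (∑ x : V, ∑ y : V, ∑ i, c i * (f i x * f i y))
        = ∑ i, ∑ x : V, ∑ y : V, c i * (f i x * f i y) from
      (Finset.sum_congr rfl fun x _ => Finset.sum_comm).trans Finset.sum_comm]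
    refine Finset.sum_congr rfl fun i _ => ?_
    rw [sq, Finset.sum_mul_sum, Finset.mul_sum]
    exact Finset.sum_congr rfl fun x _ => by rw [Finset.mul_sum]
  rw [hsum]
  calc ∑ i, c i * (∑ x, f i x) ^ 2 ≤ ∑ i, (c i * ∑ x, f i x ^ 2) * N :=
        Finset.sum_le_sum fun i _ => hkey i
    _ = (∑ i, c i * ∑ x, f i x ^ 2) * N := by rw [Finset.sum_mul]
    _ = N := by rw [htr', one_mul]

lemma exists_indep_card {V : Type*} [Fintype V] (G : SimpleGraph V) :
    ∃ I : Finset V, IsIndep G I ∧ I.card = indepNum G := by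
  obtain ⟨I, -, hI⟩ := Finset.exists_mem_eq_sup Finset.univ
    (Finset.univ_nonempty (α := Finset V))
    (fun I : Finset V => if IsIndep G I then I.card else 0)
  by_cases h : IsIndep G I
  · exact ⟨I, h, by rw [indepNum, hI, if_pos h]⟩
  · refine ⟨∅, fun x hx => absurd hx (Finset.notMem_empty x), ?_⟩
    rw [Finset.card_empty, indepNum, hI, if_neg h]

lemma indepNum_pos {V : Type*} [Fintype V] [Nonempty V] (G : SimpleGraph V) :
    1 ≤ indepNum G := by
  obtain ⟨v⟩ := (inferInstance : Nonempty V)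
  have hind : IsIndep G {v} := by
    intro x hx y hy
    rw [Finset.mem_singleton] at hx hy
    subst hx; subst hy
    exact G.irrefl
  have := indep_card_le G {v} hind
  simpa using this

lemma construct_mem {V : Type*} [Fintype V] [Nonempty V] (G : SimpleGraph V) :
    ∃ A : Matrix V V ℝ, IsCP A ∧ A.trace = 1 ∧ (∀ x y, G.Adj x y → A x y = 0) ∧
      (indepNum G : ℝ) = ∑ x, ∑ y, A x y := by
  obtain ⟨I, hI, hcard⟩ := exists_indep_card G
  have hpos : 0 < (I.card : ℝ) := by
    have := indepNum_pos G
    have : 1 ≤ I.card := hcard ▸ this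
    exact_mod_cast Nat.lt_of_lt_of_le Nat.zero_lt_one this
  set g : V → ℝ := fun x => if x ∈ I then 1 else 0 with hg
  have hg0 : ∀ x, 0 ≤ g x := fun x => by by_cases hx : x ∈ I <;> simp [hg, hx]
  have hsumg : ∑ x, g x = I.card := by
    rw [hg]; rw [Finset.sum_ite_mem, Finset.univ_inter, Finset.sum_const,
      nsmul_eq_mul, mul_one]
  have hsumg2 : ∑ x, g x * g x = I.card := by
    rw [← hsumg]
    refine Finset.sum_congr rfl fun x _ => ?_
    by_cases hx : x ∈ I <;> simp [hg, hx]
  set c : ℝ := (I.card : ℝ)⁻¹ with hc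
  refine ⟨c • Matrix.of (fun x y => g x * g y), ⟨1, fun _ => c, fun _ => g,
    fun _ => le_of_lt (inv_pos.2 hpos), fun _ x => hg0 x, by
      rw [Fin.sum_univ_one]⟩, ?_, ?_, ?_⟩
  · rw [Matrix.trace_smul]
    show c • (∑ x, g x * g x) = 1
    rw [hsumg2, smul_eq_mul, hc, inv_mul_cancel₀ (ne_of_gt hpos)]
  · intro x y hadj
    show c * (g x * g y) = 0
    have : g x * g y = 0 := by
      rw [hg]
      by_cases hx : x ∈ I
      · by_cases hy : y ∈ I
        · exact absurd hadj (hI x hx y hy)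
        · simp [hy]
      · simp [hx]
    rw [this, mul_zero]
  · have : ∀ x y : V, (c • Matrix.of (fun x y => g x * g y)) x y = c * (g x * g y) :=
      fun x y => rfl
    simp_rw [this]
    rw [show (∑ x, ∑ y, c * (g x * g y)) = c * ((∑ x, g x) * (∑ y, g y)) by
      rw [Finset.sum_mul_sum, Finset.mul_sum]
      exact Finset.sum_congr rfl fun x _ => by rw [Finset.mul_sum]]
    rw [hsumg, hc, ← hcard]
    field_simp

theorem stmt1 {V : Type*} [Fintype V] (G : SimpleGraph V)
    (n : ℕ) (α : Fin n → ℝ) (f : Fin n → V → ℝ)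
    (hα : ∀ i, 0 < α i) (hf : ∀ i x, 0 ≤ f i x)
    (hnorm : ∀ i, ∑ x, f i x ^ 2 = 1)
    (A : Matrix V V ℝ)
    (hA : A = ∑ i, α i • Matrix.of (fun x y => f i x * f i y))
    (htr : A.trace = 1)
    (hedge : ∀ x y, G.Adj x y → A x y = 0) :
    (∑ x, ∑ y, A x y) ≤ (indepNum G : ℝ) ∧ thetaCP G = (indepNum G : ℝ) := by
  constructor
  · exact key G n α f (fun i => le_of_lt (hα i)) hf A hA htr hedge
  · set S : Set ℝ := {r : ℝ | ∃ A : Matrix V V ℝ, IsCP A ∧ A.trace = 1 ∧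
      (∀ x y, G.Adj x y → A x y = 0) ∧ r = ∑ x, ∑ y, A x y} with hS
    have hub : ∀ r ∈ S, r ≤ (indepNum G : ℝ) := by
      rintro r ⟨B, ⟨m, c, g, hc, hg, hBeq⟩, htrB, hedgeB, rfl⟩
      exact key G m c g hc hg B hBeq htrB hedgeB
    cases isEmpty_or_nonempty V with
    | inl h =>
      have hSe : S = ∅ := by
        rw [hS, Set.eq_empty_iff_forall_notMem]
        rintro r ⟨B, -, htrB, -, -⟩
        rw [Matrix.trace] at htrB
        simp at htrB
      have hN0 : indepNum G = 0 := by
        refine Nat.le_antisymm ?_ (Nat.zero_le _)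
        refine Finset.sup_le fun I _ => ?_
        have : I = ∅ := Finset.eq_empty_of_isEmpty I
        subst this
        simp
      rw [thetaCP, ← hS, hSe, Real.sSup_empty, hN0, Nat.cast_zero]
    | inr h =>
      have hmem : (indepNum G : ℝ) ∈ S := construct_mem G
      rw [thetaCP, ← hS]
      exact le_antisymm (Real.sSup_le hub (by positivity)) (le_csSup ⟨_, hub⟩ hmem)
end

section
/- Let G = (V, E) be a finite graph, t ≥ 1, and let A be a positive semidefinite matrix indexed by I_t (the independent sets of size at most t) such that for every S ∈ I_{2t}: if S = {i} for some vertex i then ∑_{J,J' ∈ I_t, J∪J' = S} A(J,J') ≤ −1, and if S is a nonempty non-singleton member of I_{2t} then ∑_{J,J' ∈ I_t, J∪J' = S} A(J,J') ≤ 0. Then A(∅,∅) ≥ α(G). -/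
open scoped Classical
open Finset Matrix

/-- The set `I_t` of independent sets of cardinality at most `t`, as a type. -/
def Idx {V : Type*} (G : SimpleGraph V) (t : ℕ) : Type _ :=
  {J : Finset V // IsIndep G J ∧ J.card ≤ t}

noncomputable instance {V : Type*} [Fintype V] (G : SimpleGraph V) (t : ℕ) :
    Fintype (Idx G t) := by unfold Idx; infer_instance

/-- The combinatorial moment matrix `M_t(y)`. -/
noncomputable def momentMatrix {V : Type*} [Fintype V] (G : SimpleGraph V) (t : ℕ)
    (y : Finset V → ℝ) : Matrix (Idx G t) (Idx G t) ℝ :=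
  Matrix.of fun J J' =>
    if IsIndep G (J.1 ∪ J'.1) ∧ (J.1 ∪ J'.1).card ≤ 2 * t then y (J.1 ∪ J'.1) else 0

/-- The Lasserre bound of step `t`. -/
noncomputable def lasserre {V : Type*} [Fintype V] (G : SimpleGraph V) (t : ℕ) : ℝ :=
  sSup {r : ℝ | ∃ y : Finset V → ℝ,
    (∀ S : Finset V, IsIndep G S → S.card ≤ 2 * t → 0 ≤ y S) ∧
    y ∅ = 1 ∧ (momentMatrix G t y).PosSemidef ∧ r = ∑ i : V, y {i}}

theorem stmt8 {V : Type*} [Fintype V] (G : SimpleGraph V) (t : ℕ) (ht : 1 ≤ t)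
    (A : Matrix (Idx G t) (Idx G t) ℝ) (hA : A.PosSemidef)
    (hsing : ∀ i : V,
      (∑ J : Idx G t, ∑ J' : Idx G t, if J.1 ∪ J'.1 = {i} then A J J' else 0) ≤ -1)
    (hother : ∀ S : Finset V, IsIndep G S → S.card ≤ 2 * t → S ≠ ∅ →
      (¬ ∃ i : V, S = {i}) →
      (∑ J : Idx G t, ∑ J' : Idx G t, if J.1 ∪ J'.1 = S then A J J' else 0) ≤ 0) :
    (indepNum G : ℝ) ≤ A ⟨∅, fun x hx => absurd hx (Finset.notMem_empty x), Nat.zero_le t⟩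
      ⟨∅, fun x hx => absurd hx (Finset.notMem_empty x), Nat.zero_le t⟩ := by
  set e : Idx G t := ⟨∅, fun x hx => absurd hx (Finset.notMem_empty x), Nat.zero_le t⟩ with he
  -- choose a maximum independent set
  obtain ⟨I, hI, hcard⟩ : ∃ I : Finset V, IsIndep G I ∧ indepNum G = I.card := by
    obtain ⟨I, -, hI⟩ := Finset.exists_mem_eq_sup (Finset.univ : Finset (Finset V))
      ⟨∅, Finset.mem_univ ∅⟩ (fun I : Finset V => if IsIndep G I then I.card else 0)
    by_cases h : IsIndep G I
    · exact ⟨I, h, by rw [indepNum, hI, if_pos h]⟩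
    · refine ⟨∅, fun x hx => absurd hx (Finset.notMem_empty x), ?_⟩
      rw [indepNum, hI, if_neg h]; simp
  set f : Finset V → ℝ :=
    fun S => ∑ J : Idx G t, ∑ J' : Idx G t, if J.1 ∪ J'.1 = S then A J J' else 0 with hf
  set v : Idx G t → ℝ := fun J => if J.1 ⊆ I then 1 else 0 with hv
  have hq : (0:ℝ) ≤ ∑ J : Idx G t, ∑ J' : Idx G t,
      (if J.1 ⊆ I ∧ J'.1 ⊆ I then A J J' else 0) := by
    have h := hA.dotProduct_mulVec_nonneg v
    simp only [star, dotProduct, Matrix.mulVec, dotProduct] at h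
    refine le_trans h (le_of_eq ?_)
    refine Finset.sum_congr rfl fun J _ => ?_
    rw [Finset.mul_sum]
    refine Finset.sum_congr rfl fun J' _ => ?_
    by_cases h1 : J.1 ⊆ I <;> by_cases h2 : J'.1 ⊆ I <;> simp [hv, h1, h2] <;> ring
  have hswap : ∑ S ∈ I.powerset, f S
      = (∑ J : Idx G t, ∑ J' : Idx G t, (if J.1 ⊆ I ∧ J'.1 ⊆ I then A J J' else 0)) := by
    simp only [hf]
    rw [Finset.sum_comm]
    refine Finset.sum_congr rfl fun J _ => ?_
    rw [Finset.sum_comm]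
    refine Finset.sum_congr rfl fun J' _ => ?_
    rw [Finset.sum_ite_eq I.powerset (J.1 ∪ J'.1) (fun _ => A J J')]
    simp [Finset.union_subset_iff]
  have hempty : f ∅ = A e e := by
    simp only [hf]
    rw [Finset.sum_eq_single e]
    · rw [Finset.sum_eq_single e]
      · simp [he]
      · intro J' _ hne
        have hne' : J'.1 ≠ ∅ := fun h => hne (Subtype.ext h)
        simp [he, hne']
      · intro h; exact absurd (Finset.mem_univ e) h
    · intro J _ hne
      refine Finset.sum_eq_zero fun J' _ => ?_
      have : ¬ (J.1 ∪ J'.1 = ∅) := by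
        simp only [Finset.union_eq_empty]
        rintro ⟨h1, -⟩
        exact hne (Subtype.ext (by simp [he, h1]))
      simp [this]
    · intro h; exact absurd (Finset.mem_univ e) h
  -- bound for nonempty subsets
  have hbig : ∀ S : Finset V, 2 * t < S.card → f S = 0 := by
    intro S hS
    refine Finset.sum_eq_zero fun J _ => Finset.sum_eq_zero fun J' _ => ?_
    have : ¬ (J.1 ∪ J'.1 = S) := by
      intro h
      have : S.card ≤ 2 * t := by
        calc S.card ≤ J.1.card + J'.1.card := h ▸ Finset.card_union_le _ _
        _ ≤ t + t := add_le_add J.2.2 J'.2.2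
        _ = 2 * t := (two_mul t).symm
      omega
    simp [this]
  have hnonpos : ∀ S ∈ I.powerset \ {∅}, (¬ ∃ i : V, S = {i}) → f S ≤ 0 := by
    intro S hS hns
    simp only [Finset.mem_sdiff, Finset.mem_powerset, Finset.mem_singleton] at hS
    by_cases hc : S.card ≤ 2 * t
    · exact hother S (fun x hx y hy => hI x (hS.1 hx) y (hS.1 hy)) hc hS.2 hns
    · exact le_of_eq (hbig S (by omega))
  -- singleton subsets
  set T : Finset (Finset V) := I.image (fun i => ({i} : Finset V)) with hT
  have hTsub : T ⊆ I.powerset \ {∅} := by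
    intro S hS
    simp only [hT, Finset.mem_image] at hS
    obtain ⟨i, hi, rfl⟩ := hS
    simp [Finset.singleton_subset_iff, hi]
  have hsum_T : ∑ S ∈ T, f S ≤ -(I.card : ℝ) := by
    rw [hT, Finset.sum_image (by intro a _ b _ h; exact Finset.singleton_injective h)]
    calc ∑ i ∈ I, f {i} ≤ ∑ _i ∈ I, (-1 : ℝ) :=
          Finset.sum_le_sum fun i _ => hsing i
      _ = -(I.card : ℝ) := by simp
  have hdrop : ∑ S ∈ I.powerset \ {∅}, f S ≤ ∑ S ∈ T, f S := by
    have := Finset.sum_le_sum_of_subset_of_nonneg hTsub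
      (f := fun S => -(f S)) (fun S hS hST => ?_)
    · linarith [Finset.sum_neg_distrib (s := T) (f := f),
        Finset.sum_neg_distrib (s := I.powerset \ {∅}) (f := f)]
    · rw [neg_nonneg]
      refine hnonpos S hS ?_
      rintro ⟨i, rfl⟩
      simp only [Finset.mem_sdiff, Finset.mem_powerset, Finset.singleton_subset_iff] at hS
      exact hST (Finset.mem_image_of_mem _ hS.1)
  have hsplit : ∑ S ∈ I.powerset, f S = f ∅ + ∑ S ∈ I.powerset \ {∅}, f S := by
    rw [← Finset.sum_sdiff (Finset.singleton_subset_iff.mpr (Finset.empty_mem_powerset I))]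
    rw [Finset.sum_singleton]
    ring
  have : (0:ℝ) ≤ A e e + (-(I.card : ℝ)) := by
    calc (0:ℝ) ≤ ∑ S ∈ I.powerset, f S := hswap.symm ▸ hq
      _ = f ∅ + ∑ S ∈ I.powerset \ {∅}, f S := hsplit
      _ ≤ A e e + (-(I.card : ℝ)) := by
          rw [hempty]
          exact add_le_add_right (le_trans hdrop hsum_T) _
  rw [hcard]
  linarith
end

section
/- Let A be an n × n real positive semidefinite matrix and X ∈ PSD(n). The set {Y ∈ PSD(n) : ker X ⊆ ker Y} is a face of the cone PSD(n) containing X, and X lies in its relative interior. In particular, if X is a relative interior point of a face F of PSD(n), then every Y ∈ F satisfies ker X ⊆ ker Y. -/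
open Matrix

/-- The set of `n × n` positive semidefinite matrices. -/
def PSDCone (n : ℕ) : Set (Matrix (Fin n) (Fin n) ℝ) := {Y | Y.PosSemidef}

/-- A subset `F` of the PSD cone is a face of it: `F` is a subcone and whenever a sum
of two PSD matrices lies in `F`, both summands do. -/
def IsPSDFace (n : ℕ) (F : Set (Matrix (Fin n) (Fin n) ℝ)) : Prop :=
  F ⊆ PSDCone n ∧
  (∀ Y ∈ F, ∀ c : ℝ, 0 ≤ c → c • Y ∈ F) ∧
  (∀ Y ∈ F, ∀ Z ∈ F, Y + Z ∈ F) ∧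
  (∀ A B : Matrix (Fin n) (Fin n) ℝ, A.PosSemidef → B.PosSemidef →
    A + B ∈ F → A ∈ F ∧ B ∈ F)


namespace Stmt17Aux

variable {n : ℕ}

lemma quad_expand (M : Matrix (Fin n) (Fin n) ℝ) (v : Fin n → ℝ) :
    v ⬝ᵥ M *ᵥ v = ∑ i, ∑ j, v i * (M i j * v j) := by
  simp [dotProduct, mulVec, Finset.mul_sum]

lemma quad_abs_le (M : Matrix (Fin n) (Fin n) ℝ) (v : Fin n → ℝ) :
    |v ⬝ᵥ M *ᵥ v| ≤ (∑ i, ∑ j, |M i j|) * ‖v‖ ^ 2 := by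
  rw [quad_expand, Finset.sum_mul]
  refine (Finset.abs_sum_le_sum_abs _ _).trans (Finset.sum_le_sum fun i _ => ?_)
  rw [Finset.sum_mul]
  refine (Finset.abs_sum_le_sum_abs _ _).trans (Finset.sum_le_sum fun j _ => ?_)
  have hvi : |v i| ≤ ‖v‖ := by
    simpa [Real.norm_eq_abs] using norm_le_pi_norm v i
  have hvj : |v j| ≤ ‖v‖ := by
    simpa [Real.norm_eq_abs] using norm_le_pi_norm v j
  have h0 : (0:ℝ) ≤ ‖v‖ := norm_nonneg v
  calc |v i * (M i j * v j)| = |v i| * |M i j| * |v j| := by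
        rw [abs_mul, abs_mul]; ring
    _ ≤ ‖v‖ * |M i j| * ‖v‖ := by
        have h := mul_le_mul hvi hvj (abs_nonneg _) h0
        nlinarith [abs_nonneg (M i j), h]
    _ = |M i j| * ‖v‖ ^ 2 := by ring

lemma entry_abs_le_dist (Y X : Fin n → Fin n → ℝ) (i j : Fin n) :
    |Y i j - X i j| ≤ dist Y X := by
  have h1 : dist (Y i) (X i) ≤ dist Y X := dist_le_pi_dist Y X i
  have h2 : dist (Y i j) (X i j) ≤ dist (Y i) (X i) := dist_le_pi_dist (Y i) (X i) j
  calc |Y i j - X i j| = dist (Y i j) (X i j) := (Real.dist_eq _ _).symm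
    _ ≤ dist Y X := h2.trans h1





lemma range_inter_ker (X : Matrix (Fin n) (Fin n) ℝ) (hX : X.PosSemidef)
    (v : Fin n → ℝ) (hv : v ∈ LinearMap.range X.mulVecLin) (hv0 : X *ᵥ v = 0) :
    v = 0 := by
  obtain ⟨u, hu⟩ := hv
  rw [mulVecLin_apply] at hu
  have hXt : Xᵀ = X := by
    have := hX.1
    rwa [IsHermitian, conjTranspose_eq_transpose_of_trivial] at this
  have hvv : v ⬝ᵥ v = 0 := by
    calc v ⬝ᵥ v = v ⬝ᵥ X *ᵥ u := by rw [hu]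
      _ = (v ᵥ* X) ⬝ᵥ u := dotProduct_mulVec v X u
      _ = (Xᵀ *ᵥ v) ⬝ᵥ u := by rw [mulVec_transpose]
      _ = 0 := by rw [hXt, hv0, zero_dotProduct]
  exact dotProduct_self_eq_zero.mp hvv

lemma range_sup_ker (X : Matrix (Fin n) (Fin n) ℝ) (hX : X.PosSemidef) :
    LinearMap.range X.mulVecLin ⊔ LinearMap.ker X.mulVecLin = ⊤ := by
  set R := LinearMap.range X.mulVecLin
  set K := LinearMap.ker X.mulVecLin
  have hdisj : R ⊓ K = ⊥ := by
    rw [Submodule.eq_bot_iff]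
    intro v hv
    obtain ⟨hvR, hvK⟩ := Submodule.mem_inf.mp hv
    exact range_inter_ker X hX v hvR (by rwa [LinearMap.mem_ker, mulVecLin_apply] at hvK)
  apply Submodule.eq_top_of_finrank_eq
  have h1 := Submodule.finrank_sup_add_finrank_inf_eq R K
  rw [hdisj, finrank_bot, add_zero] at h1
  have h2 := LinearMap.finrank_range_add_finrank_ker X.mulVecLin
  rw [h1, h2]

lemma exists_decomp (X : Matrix (Fin n) (Fin n) ℝ) (hX : X.PosSemidef) (u : Fin n → ℝ) :
    ∃ v w, v ∈ LinearMap.range X.mulVecLin ∧ X *ᵥ w = 0 ∧ u = v + w := by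
  have := range_sup_ker X hX
  have hu : u ∈ LinearMap.range X.mulVecLin ⊔ LinearMap.ker X.mulVecLin := this ▸ Submodule.mem_top
  obtain ⟨v, hv, w, hw, huvw⟩ := Submodule.mem_sup.mp hu
  exact ⟨v, w, hv, by rwa [LinearMap.mem_ker, mulVecLin_apply] at hw, huvw.symm⟩

lemma quad_lower (X : Matrix (Fin n) (Fin n) ℝ) (hX : X.PosSemidef) :
    ∃ c > 0, ∀ v ∈ LinearMap.range X.mulVecLin, c * ‖v‖ ^ 2 ≤ v ⬝ᵥ X *ᵥ v := by
  set R := LinearMap.range X.mulVecLin with hR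
  have hpos : ∀ v ∈ R, v ≠ 0 → 0 < v ⬝ᵥ X *ᵥ v := by
    intro v hvR hv0
    rcases lt_or_eq_of_le (by simpa using hX.dotProduct_mulVec_nonneg v) with h | h
    · exact h
    · exfalso
      apply hv0
      refine range_inter_ker X hX v hvR ?_
      exact (hX.dotProduct_mulVec_zero_iff v).mp (by simpa using h.symm)
  have hcont : Continuous fun v : Fin n → ℝ => v ⬝ᵥ X *ᵥ v := by
    have : (fun v : Fin n → ℝ => v ⬝ᵥ X *ᵥ v)
        = fun v => ∑ i, ∑ j, v i * (X i j * v j) := by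
      funext v; exact quad_expand X v
    rw [this]
    exact continuous_finset_sum _ fun i _ => continuous_finset_sum _ fun j _ =>
      (continuous_apply i).mul (continuous_const.mul (continuous_apply j))
  set S : Set (Fin n → ℝ) := (R : Set (Fin n → ℝ)) ∩ Metric.sphere 0 1 with hS
  rcases S.eq_empty_or_nonempty with hSe | hSne
  · refine ⟨1, one_pos, fun v hv => ?_⟩
    have hv0 : v = 0 := by
      by_contra h
      have : (‖v‖⁻¹ • v) ∈ S := by
        constructor
        · exact Submodule.smul_mem R _ hv
        · rw [mem_sphere_zero_iff_norm, norm_smul, norm_inv, norm_norm,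
            inv_mul_cancel₀ (norm_ne_zero_iff.mpr h)]
      rw [hSe] at this
      exact this
    simp [hv0]
  · have hScpt : IsCompact S := by
      exact Metric.isCompact_of_isClosed_isBounded
        ((Submodule.closed_of_finiteDimensional R).inter Metric.isClosed_sphere)
        (Metric.isBounded_sphere.subset Set.inter_subset_right)
    obtain ⟨v₀, hv₀S, hmin⟩ := hScpt.exists_isMinOn hSne hcont.continuousOn
    have hv₀ne : v₀ ≠ 0 := by
      intro h
      have := hv₀S.2
      rw [mem_sphere_zero_iff_norm, h] at this
      simp at this
    refine ⟨v₀ ⬝ᵥ X *ᵥ v₀, hpos v₀ hv₀S.1 hv₀ne, fun v hv => ?_⟩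
    rcases eq_or_ne v 0 with rfl | hne
    · simp
    · set a := ‖v‖ with ha
      have ha0 : 0 < a := norm_pos_iff.mpr hne
      set u := a⁻¹ • v with hu
      have huS : u ∈ S := by
        constructor
        · exact Submodule.smul_mem R _ hv
        · rw [mem_sphere_zero_iff_norm, norm_smul, norm_inv, norm_norm,
            inv_mul_cancel₀ (norm_ne_zero_iff.mpr hne)]
      have hle : v₀ ⬝ᵥ X *ᵥ v₀ ≤ u ⬝ᵥ X *ᵥ u := hmin huS
      have hva : v = a • u := by
        rw [hu, smul_smul, mul_inv_cancel₀ ha0.ne', one_smul]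
      have hq : v ⬝ᵥ X *ᵥ v = a ^ 2 * (u ⬝ᵥ X *ᵥ u) := by
        rw [hva, smul_dotProduct, mulVec_smul, dotProduct_smul]
        simp only [smul_eq_mul]; ring
      rw [hq]
      have h2 : (0:ℝ) ≤ a ^ 2 := sq_nonneg a
      nlinarith [mul_le_mul_of_nonneg_left hle h2]


def symmKer (X : Matrix (Fin n) (Fin n) ℝ) : Submodule ℝ (Matrix (Fin n) (Fin n) ℝ) where
  carrier := {Y | Yᵀ = Y ∧ ∀ v : Fin n → ℝ, X *ᵥ v = 0 → Y *ᵥ v = 0}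
  add_mem' := by
    rintro A B ⟨hA1, hA2⟩ ⟨hB1, hB2⟩
    refine ⟨by rw [transpose_add, hA1, hB1], fun v hv => ?_⟩
    rw [add_mulVec, hA2 v hv, hB2 v hv, add_zero]
  zero_mem' := ⟨transpose_zero, fun v _ => zero_mulVec v⟩
  smul_mem' := by
    rintro c A ⟨hA1, hA2⟩
    refine ⟨by rw [transpose_smul, hA1], fun v hv => ?_⟩
    rw [smul_mulVec, hA2 v hv, smul_zero]

/-- Key quantitative statement: every symmetric matrix `Y` vanishing on `ker X` and
close enough to `X` is PSD. -/
abbrev mfun (A : Matrix (Fin n) (Fin n) ℝ) : Fin n → Fin n → ℝ := A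

lemma psd_of_close (X : Matrix (Fin n) (Fin n) ℝ) (hX : X.PosSemidef) :
    ∃ ε > 0, ∀ Y : Matrix (Fin n) (Fin n) ℝ, Yᵀ = Y →
      (∀ v : Fin n → ℝ, X *ᵥ v = 0 → Y *ᵥ v = 0) →
      dist (mfun Y) (mfun X) < ε → Y.PosSemidef := by
  obtain ⟨c, hc, hcle⟩ := quad_lower X hX
  refine ⟨c / ((n : ℝ) ^ 2 + 1), by positivity, fun Y hYsymm hYker hdist => ?_⟩
  refine PosSemidef.of_dotProduct_mulVec_nonneg ?_ ?_
  · show Yᴴ = Y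
    rw [conjTranspose_eq_transpose_of_trivial, hYsymm]
  · intro u
    rw [star_trivial]
    obtain ⟨v, w, hvR, hw, rfl⟩ := exists_decomp X hX u
    have hYw : Y *ᵥ w = 0 := hYker w hw
    have hstep1 : (v + w) ⬝ᵥ Y *ᵥ (v + w) = v ⬝ᵥ Y *ᵥ v := by
      rw [mulVec_add, hYw, add_zero, add_dotProduct]
      have : w ⬝ᵥ Y *ᵥ v = 0 := by
        rw [dotProduct_mulVec, ← mulVec_transpose, hYsymm, hYw, zero_dotProduct]
      rw [this, add_zero]
    rw [hstep1]
    have hsplit : v ⬝ᵥ Y *ᵥ v = v ⬝ᵥ X *ᵥ v + v ⬝ᵥ (Y - X) *ᵥ v := by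
      rw [sub_mulVec, dotProduct_sub]; ring
    have habs := quad_abs_le (Y - X) v
    have hsum : (∑ i, ∑ j, |(Y - X) i j|) ≤ (n : ℝ) ^ 2 * dist (mfun Y) (mfun X) := by
      calc (∑ i, ∑ j, |(Y - X) i j|)
          ≤ ∑ _i : Fin n, ∑ _j : Fin n, dist (mfun Y) (mfun X) := by
            refine Finset.sum_le_sum fun i _ => Finset.sum_le_sum fun j _ => ?_
            exact entry_abs_le_dist (mfun Y) (mfun X) i j
        _ = (n : ℝ) ^ 2 * dist (mfun Y) (mfun X) := by
            simp [Finset.sum_const]; ring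
    have hXv := hcle v hvR
    have hv2 : (0:ℝ) ≤ ‖v‖ ^ 2 := sq_nonneg _
    have hdn : (0:ℝ) ≤ (n:ℝ)^2 := sq_nonneg _
    have hkey : (n : ℝ) ^ 2 * dist (mfun Y) (mfun X) ≤ c := by
      have h1 : (n:ℝ)^2 * dist (mfun Y) (mfun X)
          ≤ (n:ℝ)^2 * (c / ((n : ℝ) ^ 2 + 1)) :=
        mul_le_mul_of_nonneg_left hdist.le hdn
      have h2 : (n:ℝ)^2 * (c / ((n : ℝ) ^ 2 + 1)) ≤ c := by
        rw [mul_div_assoc'] at *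
        rw [div_le_iff₀ (by positivity)]
        nlinarith
      linarith
    have habs2 : |v ⬝ᵥ (Y - X) *ᵥ v| ≤ c * ‖v‖ ^ 2 := by
      refine habs.trans ?_
      exact mul_le_mul_of_nonneg_right (le_trans hsum hkey) hv2
    rw [hsplit]
    have := abs_le.mp habs2
    nlinarith [this.1]

end Stmt17Aux

open Stmt17Aux in
/-- Hill–Waters: for `X` PSD, `{Y PSD : ker X ⊆ ker Y}` is a face of the PSD cone
containing `X` in its relative interior; consequently, if `X` lies in the relative
interior of a face `F'`, then `ker X ⊆ ker Y` for every `Y ∈ F'`. -/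
theorem stmt17 (n : ℕ) (X : Matrix (Fin n) (Fin n) ℝ) (hX : X.PosSemidef)
    (F : Set (Matrix (Fin n) (Fin n) ℝ))
    (hF : F = {Y | Y.PosSemidef ∧
      LinearMap.ker X.mulVecLin ≤ LinearMap.ker Y.mulVecLin}) :
    X ∈ F ∧ IsPSDFace n F ∧ X ∈ intrinsicInterior ℝ F ∧
    (∀ F' : Set (Matrix (Fin n) (Fin n) ℝ), IsPSDFace n F' →
      X ∈ intrinsicInterior ℝ F' →
      ∀ Y ∈ F', LinearMap.ker X.mulVecLin ≤ LinearMap.ker Y.mulVecLin) := by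
  subst hF
  have hXmem : X ∈ {Y : Matrix (Fin n) (Fin n) ℝ | Y.PosSemidef ∧
      LinearMap.ker X.mulVecLin ≤ LinearMap.ker Y.mulVecLin} := ⟨hX, le_refl _⟩
  refine ⟨hXmem, ⟨fun Y hY => hY.1, ?_, ?_, ?_⟩, ?_, ?_⟩
  · -- closed under nonneg smul
    rintro Y ⟨hY1, hY2⟩ c hc
    refine ⟨PosSemidef.of_dotProduct_mulVec_nonneg ?_ ?_, ?_⟩
    · show (c • Y)ᴴ = c • Y
      rw [conjTranspose_smul, hY1.1.eq, star_trivial]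
    · intro u
      have := hY1.dotProduct_mulVec_nonneg u
      rw [smul_mulVec, dotProduct_smul, smul_eq_mul]
      exact mul_nonneg hc this
    · intro v hv
      have h0 : Y.mulVecLin v = 0 := hY2 hv
      rw [LinearMap.mem_ker, mulVecLin_apply] at *
      rw [smul_mulVec, h0, smul_zero]
  · -- closed under addition
    rintro Y ⟨hY1, hY2⟩ Z ⟨hZ1, hZ2⟩
    refine ⟨hY1.add hZ1, fun v hv => ?_⟩
    have hY0 := hY2 hv
    have hZ0 := hZ2 hv
    rw [LinearMap.mem_ker, mulVecLin_apply] at *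
    rw [add_mulVec, hY0, hZ0, add_zero]
  · -- face splitting
    rintro A B hA hB ⟨_, hAB2⟩
    have key : ∀ v ∈ LinearMap.ker X.mulVecLin, A *ᵥ v = 0 ∧ B *ᵥ v = 0 := by
      intro v hv
      have hABv : (A + B) *ᵥ v = 0 := by
        have := hAB2 hv
        rwa [LinearMap.mem_ker, mulVecLin_apply] at this
      have hsum : v ⬝ᵥ A *ᵥ v + v ⬝ᵥ B *ᵥ v = 0 := by
        rw [← dotProduct_add, ← add_mulVec, hABv, dotProduct_zero]
      have hA0 : 0 ≤ v ⬝ᵥ A *ᵥ v := by simpa using hA.dotProduct_mulVec_nonneg v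
      have hB0 : 0 ≤ v ⬝ᵥ B *ᵥ v := by simpa using hB.dotProduct_mulVec_nonneg v
      constructor
      · refine (hA.dotProduct_mulVec_zero_iff v).mp ?_
        rw [star_trivial]; linarith
      · refine (hB.dotProduct_mulVec_zero_iff v).mp ?_
        rw [star_trivial]; linarith
    refine ⟨⟨hA, fun v hv => ?_⟩, ⟨hB, fun v hv => ?_⟩⟩
    · rw [LinearMap.mem_ker, mulVecLin_apply]; exact (key v hv).1
    · rw [LinearMap.mem_ker, mulVecLin_apply]; exact (key v hv).2
  · -- X in intrinsic interior
    set F := {Y : Matrix (Fin n) (Fin n) ℝ | Y.PosSemidef ∧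
      LinearMap.ker X.mulVecLin ≤ LinearMap.ker Y.mulVecLin} with hFdef
    have hspan_le : affineSpan ℝ F ≤ (symmKer X).toAffineSubspace := by
      refine affineSpan_le.mpr ?_
      rintro Y ⟨hY1, hY2⟩
      rw [SetLike.mem_coe, Submodule.mem_toAffineSubspace]
      refine ⟨?_, fun v hv => ?_⟩
      · have := hY1.1
        rwa [IsHermitian, conjTranspose_eq_transpose_of_trivial] at this
      · have : v ∈ LinearMap.ker X.mulVecLin := by
          rw [LinearMap.mem_ker, mulVecLin_apply]; exact hv
        have := hY2 this
        rwa [LinearMap.mem_ker, mulVecLin_apply] at this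
    obtain ⟨ε, hε, hball⟩ := psd_of_close X hX
    have hXspan : X ∈ affineSpan ℝ F := subset_affineSpan ℝ F hXmem
    rw [mem_intrinsicInterior]
    refine ⟨⟨X, hXspan⟩, ?_, rfl⟩
    rw [mem_interior]
    refine ⟨Subtype.val ⁻¹' (Metric.ball (mfun X) ε : Set (Fin n → Fin n → ℝ)), ?_, ?_, ?_⟩
    · rintro ⟨Y, hYspan⟩ hYd
      have hYW : Y ∈ symmKer X := by
        have := hspan_le hYspan
        rwa [Submodule.mem_toAffineSubspace] at this
      have hdist : dist (mfun Y) (mfun X) < ε := hYd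
      refine ⟨hball Y hYW.1 hYW.2 hdist, fun v hv => ?_⟩
      rw [LinearMap.mem_ker, mulVecLin_apply] at *
      exact hYW.2 v hv
    · exact (Metric.isOpen_ball (x := mfun X) (ε := ε)).preimage continuous_subtype_val
    · show dist (mfun X) (mfun X) < ε
      simpa using hε
  · -- final claim
    rintro F' hF' hXint Y hY v hv
    obtain ⟨y, hyint, hyX⟩ := mem_intrinsicInterior.mp hXint
    have hXspan' : X ∈ affineSpan ℝ F' := hyX ▸ y.2
    have hYspan : Y ∈ affineSpan ℝ F' := subset_affineSpan ℝ F' hY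
    rw [mem_interior_iff_mem_nhds] at hyint
    obtain ⟨u, hu, hsub⟩ := (mem_nhds_induced Subtype.val y _).mp hyint
    rw [hyX] at hu
    obtain ⟨ε, hε, hballu⟩ := Metric.mem_nhds_iff.mp (show u ∈ nhds (mfun X) from hu)
    set a := ‖mfun X - mfun Y‖ with ha
    have ha0 : (0:ℝ) ≤ a := norm_nonneg _
    set t := ε / (2 * (a + 1)) with ht
    have ht0 : 0 < t := by positivity
    have hta : t * a < ε := by
      rw [ht, div_mul_eq_mul_div, div_lt_iff₀ (by positivity)]
      nlinarith
    set Z := X + t • (X - Y) with hZ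
    have hZspan : Z ∈ affineSpan ℝ F' := by
      have := AffineMap.lineMap_mem (k := ℝ) (1 + t) hYspan hXspan'
      have hEq : AffineMap.lineMap Y X (1 + t) = Z := by
        rw [AffineMap.lineMap_apply_module, hZ]
        module
      rwa [hEq] at this
    have hZF' : Z ∈ F' := by
      have hmem : (⟨Z, hZspan⟩ : affineSpan ℝ F') ∈ Subtype.val ⁻¹' u := by
        refine hballu ?_
        show dist (mfun Z) (mfun X) < ε
        have hd : mfun Z - mfun X = t • (mfun X - mfun Y) := by
          show (X + t • (X - Y)) - X = t • (X - Y)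
          abel
        rw [dist_eq_norm, hd, norm_smul, Real.norm_eq_abs, abs_of_pos ht0]
        exact hta
      exact hsub hmem
    have hZpsd : Z.PosSemidef := hF'.1 hZF'
    have hYpsd : Y.PosSemidef := hF'.1 hY
    have hXv : X *ᵥ v = 0 := by rwa [LinearMap.mem_ker, mulVecLin_apply] at hv
    have hZv : v ⬝ᵥ Z *ᵥ v = -t * (v ⬝ᵥ Y *ᵥ v) := by
      rw [hZ, add_mulVec, smul_mulVec, sub_mulVec, hXv, dotProduct_add,
        dotProduct_smul, dotProduct_sub, dotProduct_zero]
      simp [smul_eq_mul]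
    have hq1 : 0 ≤ v ⬝ᵥ Y *ᵥ v := by simpa using hYpsd.dotProduct_mulVec_nonneg v
    have hq2 : 0 ≤ v ⬝ᵥ Z *ᵥ v := by simpa using hZpsd.dotProduct_mulVec_nonneg v
    have hq0 : v ⬝ᵥ Y *ᵥ v = 0 := by
      rw [hZv] at hq2
      nlinarith
    rw [LinearMap.mem_ker, mulVecLin_apply]
    exact (hYpsd.dotProduct_mulVec_zero_iff v).mp (by rwa [star_trivial])
end
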